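/- arXiv:2406.17748 — 5 statements merged into one kernel-verified Lean document; each statement's English description precedes it below -/
import Mathlib

section
/- Let H ∈ ℝ^{mn×mn} and define the rearrangement operator R by R(H)[mi+i', nj+j'] = H[mj+i, mj'+i'] for 0 ≤ i,i' < m and 0 ≤ j,j' < n, giving R(H) ∈ ℝ^{m²×n²}. Then H = A ⊗ B for A ∈ ℝ^{m×m}, B ∈ ℝ^{n×n} if and only if R(H) = vec(A) vec(B)ᵀ. -/
open Matrix Kronecker

/-- Vectorization of an `m × n` matrix: the index pair `(i, j)` represents
the entry in row `i`, column `j` (an identification of `ℝ^{m×n}` with `ℝ^{mn}`). -/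
def vec {m n : ℕ} (M : Matrix (Fin m) (Fin n) ℝ) : Fin m × Fin n → ℝ :=
  fun p => M p.1 p.2

/-- The van Loan rearrangement operator `R : ℝ^{mn×mn} → ℝ^{m²×n²}`:
the entry of `R(H)` at row pair `(i, i')` and column pair `(j, j')` is the
entry of `H` at the mn-indices `(i, j)` (row) and `(i', j')` (column). -/
def rearrange {m n : ℕ} (H : Matrix (Fin m × Fin n) (Fin m × Fin n) ℝ) :
    Matrix (Fin m × Fin m) (Fin n × Fin n) ℝ :=
  Matrix.of fun p q => H (p.1, q.1) (p.2, q.2)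

theorem rearrange_apply {m n : ℕ} (H : Matrix (Fin m × Fin n) (Fin m × Fin n) ℝ)
    (p : Fin m × Fin m) (q : Fin n × Fin n) :
    rearrange H p q = H (p.1, q.1) (p.2, q.2) :=
  rfl

theorem rearrange_injective {m n : ℕ} :
    Function.Injective (rearrange : Matrix (Fin m × Fin n) (Fin m × Fin n) ℝ → _) := by
  intro H H' h
  ext ⟨i, j⟩ ⟨i', j'⟩
  simpa only [rearrange_apply] using congr_fun₂ h (i, i') (j, j')

theorem rearrange_kronecker {m n : ℕ} (A : Matrix (Fin m) (Fin m) ℝ)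
    (B : Matrix (Fin n) (Fin n) ℝ) :
    rearrange (A ⊗ₖ B) = vecMulVec (_root_.vec A) (_root_.vec B) := by
  ext p q
  rfl

/-- `H = A ⊗ B` if and only if the rearrangement of `H` equals the rank-one
outer product `vec(A) vec(B)ᵀ`. -/
theorem eq_kronecker_iff_rearrange_eq_vecMulVec {m n : ℕ}
    (H : Matrix (Fin m × Fin n) (Fin m × Fin n) ℝ)
    (A : Matrix (Fin m) (Fin m) ℝ) (B : Matrix (Fin n) (Fin n) ℝ) :
    H = A ⊗ₖ B ↔ rearrange H = vecMulVec (_root_.vec A) (_root_.vec B) := by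
  rw [← rearrange_kronecker, rearrange_injective.eq_iff]
end

section
/- Let g₁, …, g_T ∈ ℝ^{mn} be the vectorizations of matrices G₁, …, G_T ∈ ℝ^{m×n}, each of rank at most r. Then for any ε > 0, ε I_{mn} + (1/r) ∑_{t=1}^T g_t g_tᵀ ≼ (ε I_m + ∑_{t=1}^T G_t G_tᵀ)^{1/2} ⊗ (ε I_n + ∑_{t=1}^T G_tᵀ G_t)^{1/2}, where ≼ denotes the Loewner order on symmetric matrices. -/
/-!
With `L = ε I + ∑ Gₜ Gₜᵀ`, `R = ε I + ∑ Gₜᵀ Gₜ` and `M` the left-hand side, a rank-`r` matrix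
satisfies `(1/r) gₜ gₜᵀ ≼ Gₜ Gₜᵀ ⊗ I` and `(1/r) gₜ gₜᵀ ≼ I ⊗ Gₜᵀ Gₜ`: testing against
`x = vec X`, both reduce to `(tr K)² ≤ rank K · tr (K Kᵀ)` for `K = Xᵀ Gₜ` resp. `X Gₜᵀ`, which is
Cauchy–Schwarz over the nonzero eigenvalues of `K Kᵀ`. Summing, `M ≼ L ⊗ I` and `M ≼ I ⊗ R`.
Conjugating by `L^{-1/2} ⊗ I` turns these into `N ≼ I` and `N ≼ C²` with
`C = L^{-1/2} ⊗ R^{1/2}`. The first gives `N ≼ N^{1/2}`, the second, by operator monotonicity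
of the square root, `N^{1/2} ≼ C`; conjugating `N ≼ C` back yields `M ≼ L^{1/2} ⊗ R^{1/2}`.
-/

open Matrix Kronecker BigOperators

open scoped ComplexOrder in
/-- The square root of a positive semidefinite matrix, as defined in the older Mathlib
(`Matrix.PosSemidef.sqrt`, removed since). -/
noncomputable def Matrix.PosSemidef.sqrt {n 𝕜 : Type*} [Fintype n] [DecidableEq n] [RCLike 𝕜]
    {A : Matrix n n 𝕜} (hA : A.PosSemidef) : Matrix n n 𝕜 :=
  hA.1.eigenvectorUnitary.1 * diagonal ((↑) ∘ (√·) ∘ hA.1.eigenvalues) *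
  (star hA.1.eigenvectorUnitary : Matrix n n 𝕜)

open scoped MatrixOrder

section CFC

variable {A : Type*} [PartialOrder A] [Ring A] [StarRing A] [TopologicalSpace A]
  [StarOrderedRing A] [Algebra ℝ A] [ContinuousFunctionalCalculus ℝ A IsSelfAdjoint]
  [NonnegSpectrumClass ℝ A] [IsSemitopologicalRing A] [T2Space A]

theorem CFC.le_sqrt_of_le_one {a : A} (h₀ : 0 ≤ a) (h₁ : a ≤ 1) : a ≤ CFC.sqrt a := by
  have hspec := (CFC.le_one_iff (R := ℝ) a).mp h₁
  rw [CFC.sqrt_eq_real_sqrt a, cfcₙ_eq_cfc]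
  nth_rw 1 [← cfc_id ℝ a]
  refine cfc_mono fun x hx => Real.le_sqrt_of_sq_le ?_
  nlinarith [hspec x hx, spectrum_nonneg_of_nonneg h₀ hx, show id x = x from rfl]

end CFC

namespace Matrix

variable {m n ι : Type*}

section Sqrt

variable [Fintype n]

theorem IsHermitian.dotProduct_mul_self_mulVec {T : Matrix n n ℝ} (hT : T.IsHermitian)
    (v : n → ℝ) : v ⬝ᵥ (T * T) *ᵥ v = T *ᵥ v ⬝ᵥ T *ᵥ v := by
  rw [← mulVec_mulVec, dotProduct_mulVec, ← mulVec_transpose,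
    ← conjTranspose_eq_transpose_of_trivial, hT.eq]

variable [DecidableEq n]

/-- `CFC.sqrt_le_sqrt` needs a C⋆-algebra, which real matrices are not. -/
theorem sqrt_le_sqrt {A B : Matrix n n ℝ} (hA : 0 ≤ A) (hAB : A ≤ B) :
    CFC.sqrt A ≤ CFC.sqrt B := by
  set S := CFC.sqrt A
  set T := CFC.sqrt B
  have hS : S.PosSemidef := (CFC.sqrt_nonneg A).posSemidef
  have hT : T.PosSemidef := (CFC.sqrt_nonneg B).posSemidef
  have hD : (T - S).IsHermitian := hT.isHermitian.sub hS.isHermitian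
  rw [le_iff, hD.posSemidef_iff_eigenvalues_nonneg]
  refine fun j => ?_
  set t := hD.eigenvalues j
  set v : n → ℝ := ⇑(hD.eigenvectorBasis j)
  have hSv : S *ᵥ v = T *ᵥ v - t • v := by
    rw [eq_sub_iff_add_eq, ← eq_sub_iff_add_eq', ← sub_mulVec]
    exact (hD.mulVec_eigenvectorBasis j).symm
  have hvv : v ⬝ᵥ v = 1 := by
    have := real_inner_self_eq_norm_sq (hD.eigenvectorBasis j)
    rw [hD.eigenvectorBasis.orthonormal.1 j, one_pow,
      EuclideanSpace.inner_eq_star_dotProduct] at this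
    simpa [v, dotProduct_comm] using this
  have hTv : 0 ≤ v ⬝ᵥ T *ᵥ v := by simpa using hT.dotProduct_mulVec_nonneg v
  have hquad : v ⬝ᵥ (B - A) *ᵥ v = 2 * t * (v ⬝ᵥ T *ᵥ v) - t ^ 2 := by
    rw [← CFC.sqrt_mul_sqrt_self B (hA.trans hAB), ← CFC.sqrt_mul_sqrt_self A hA, sub_mulVec,
      dotProduct_sub, hT.isHermitian.dotProduct_mul_self_mulVec,
      hS.isHermitian.dotProduct_mul_self_mulVec, hSv]
    simp only [dotProduct_sub, sub_dotProduct, dotProduct_smul, smul_dotProduct, smul_eq_mul,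
      dotProduct_comm (T *ᵥ v) v, hvv]
    ring
  have hBA := (le_iff.mp hAB).dotProduct_mulVec_nonneg v
  rw [star_trivial, hquad] at hBA
  show 0 ≤ t
  by_contra! ht
  nlinarith [mul_nonpos_of_nonpos_of_nonneg ht.le hTv]

theorem le_of_le_one_of_le_mul_self {N C : Matrix n n ℝ} (hN : 0 ≤ N) (hC : 0 ≤ C)
    (h₁ : N ≤ 1) (h₂ : N ≤ C * C) : N ≤ C :=
  calc N ≤ CFC.sqrt N := CFC.le_sqrt_of_le_one hN h₁
    _ ≤ CFC.sqrt (C * C) := sqrt_le_sqrt hN h₂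
    _ = C := CFC.sqrt_mul_self C hC

end Sqrt

theorem le_sqrt_kronecker_sqrt [Fintype m] [Fintype n] [DecidableEq m] [DecidableEq n]
    {L : Matrix m m ℝ} {R : Matrix n n ℝ} {M : Matrix (m × n) (m × n) ℝ}
    (hL : L.PosDef) (hR : 0 ≤ R) (hM : 0 ≤ M) (hML : M ≤ L ⊗ₖ 1) (hMR : M ≤ 1 ⊗ₖ R) :
    M ≤ CFC.sqrt L ⊗ₖ CFC.sqrt R := by
  set Q := CFC.sqrt L
  have hQ : 0 ≤ Q := CFC.sqrt_nonneg L
  have hQQ : Q * Q = L := CFC.sqrt_mul_sqrt_self L hL.posSemidef.nonneg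
  have hQdet : IsUnit Q.det :=
    (isUnit_iff_isUnit_det Q).mp (isUnit_of_mul_isUnit_left (hQQ ▸ hL.isUnit))
  set P := Q⁻¹ ⊗ₖ (1 : Matrix n n ℝ)
  set P' := Q ⊗ₖ (1 : Matrix n n ℝ)
  have hP : 0 ≤ P := (hQ.posSemidef.inv.kronecker PosSemidef.one).nonneg
  have hP' : 0 ≤ P' := (hQ.posSemidef.kronecker PosSemidef.one).nonneg
  have hPP' : P * P' = 1 := by simp [P, P', ← mul_kronecker_mul, nonsing_inv_mul Q hQdet]
  have hP'P : P' * P = 1 := by simp [P, P', ← mul_kronecker_mul, mul_nonsing_inv Q hQdet]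
  set C := Q⁻¹ ⊗ₖ CFC.sqrt R
  have hC : 0 ≤ C := (hQ.posSemidef.inv.kronecker (CFC.sqrt_nonneg R).posSemidef).nonneg
  have hN : 0 ≤ P * M * P := by simpa using conjugate_le_conjugate_of_nonneg hM hP
  have hN₁ : P * M * P ≤ 1 := by
    simpa [P, ← mul_kronecker_mul, ← hQQ, ← Matrix.mul_assoc, nonsing_inv_mul Q hQdet,
      mul_nonsing_inv Q hQdet] using conjugate_le_conjugate_of_nonneg hML hP
  have hN₂ : P * M * P ≤ C * C := by
    simpa [P, C, ← mul_kronecker_mul, CFC.sqrt_mul_sqrt_self R hR] using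
      conjugate_le_conjugate_of_nonneg hMR hP
  calc M = P' * (P * M * P) * P' := by
        simp only [← Matrix.mul_assoc, hP'P, Matrix.one_mul]
        simp only [Matrix.mul_assoc, hPP', Matrix.mul_one]
    _ ≤ P' * C * P' :=
      conjugate_le_conjugate_of_nonneg (le_of_le_one_of_le_mul_self hN hC hN₁ hN₂) hP'
    _ = Q ⊗ₖ CFC.sqrt R := by simp [P', C, ← mul_kronecker_mul, mul_nonsing_inv Q hQdet]

theorem trace_sq_le_rank_mul_trace_mul_transpose [Fintype n] [DecidableEq n]
    (K : Matrix n n ℝ) :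
    K.trace ^ 2 ≤ K.rank * (K * Kᵀ).trace := by
  have hH : (K * Kᵀ).IsHermitian := by
    simpa using (posSemidef_self_mul_conjTranspose K).isHermitian
  set d := hH.eigenvalues
  set U : Matrix n n ℝ := (hH.eigenvectorUnitary : Matrix n n ℝ)
  have hU : U * star U = 1 := Unitary.mul_star_self_of_mem hH.eigenvectorUnitary.2
  set J := star U * K * U
  have hJtrace : J.trace = K.trace := by rw [trace_mul_cycle, hU, Matrix.one_mul]
  have hJJ : J * Jᵀ = diagonal d := by
    have hdiag := hH.conjStarAlgAut_star_eigenvectorUnitary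
    simp only [Unitary.conjStarAlgAut_apply, Unitary.coe_star, star_star] at hdiag
    have hUt : star U = Uᵀ := by rw [star_eq_conjTranspose, conjTranspose_eq_transpose_of_trivial]
    calc J * Jᵀ = star U * K * (U * star U) * Kᵀ * U := by
          simp only [J, transpose_mul, hUt, transpose_transpose, Matrix.mul_assoc]
      _ = diagonal d := by rw [hU, Matrix.mul_one, Matrix.mul_assoc (star U) K, hdiag]; rfl
  have hJd (p : n) : J p p ^ 2 ≤ d p := by
    have hp := congrFun (congrFun hJJ p) p
    rw [diagonal_apply_eq, mul_apply] at hp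
    rw [← hp, sq]
    exact Finset.single_le_sum (f := fun q => J p q * Jᵀ q p)
      (fun q _ => mul_self_nonneg (J p q)) (Finset.mem_univ p)
  set S := Finset.univ.filter fun p => d p ≠ 0
  have hS : S.card = K.rank := by
    rw [← rank_self_mul_transpose, hH.rank_eq_card_non_zero_eigs, Fintype.card_subtype]
  have hJS : J.trace = ∑ p ∈ S, J p p := by
    refine (Finset.sum_filter_of_ne (p := fun p => d p ≠ 0) fun p _ hJp hdp => hJp ?_).symm
    exact pow_eq_zero_iff two_ne_zero |>.mp (le_antisymm ((hJd p).trans_eq hdp) (sq_nonneg _))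
  have hdS : (K * Kᵀ).trace = ∑ p ∈ S, d p := by
    rw [Finset.sum_filter_ne_zero, hH.trace_eq_sum_eigenvalues]; rfl
  calc K.trace ^ 2 = (∑ p ∈ S, J p p) ^ 2 := by rw [← hJtrace, hJS]
    _ ≤ S.card * ∑ p ∈ S, J p p ^ 2 := sq_sum_le_card_mul_sum_sq
    _ ≤ S.card * ∑ p ∈ S, d p := by gcongr with p; exact hJd p
    _ = K.rank * (K * Kᵀ).trace := by rw [hS, hdS]

theorem trace_sq_le_of_rank_le [Fintype n] [DecidableEq n] {r : ℕ} {K : Matrix n n ℝ}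
    (hK : K.rank ≤ r) :
    K.trace ^ 2 ≤ r * (K * Kᵀ).trace := by
  refine (trace_sq_le_rank_mul_trace_mul_transpose K).trans ?_
  gcongr
  simpa using (posSemidef_self_mul_conjTranspose K).trace_nonneg

theorem inv_smul_vecMulVec_le [Fintype ι] {v : ι → ℝ} {T : Matrix ι ι ℝ} {c : ℝ} (hc : 0 < c)
    (hT : T.IsHermitian) (h : ∀ x, (v ⬝ᵥ x) ^ 2 ≤ c * (x ⬝ᵥ T *ᵥ x)) :
    c⁻¹ • vecMulVec v v ≤ T := by
  have hv : (c⁻¹ • vecMulVec v v).IsHermitian := by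
    simpa using ((posSemidef_vecMulVec_self_star v).smul (inv_nonneg.mpr hc.le)).isHermitian
  refine PosSemidef.of_dotProduct_mulVec_nonneg (hT.sub hv) fun x => ?_
  have hx : x ⬝ᵥ vecMulVec v v *ᵥ x = (v ⬝ᵥ x) ^ 2 := by
    simp [vecMulVec_mulVec, sq, dotProduct_comm x v]
  rw [star_trivial, sub_mulVec, dotProduct_sub, smul_mulVec, dotProduct_smul, hx, smul_eq_mul,
    sub_nonneg, inv_mul_le_iff₀ hc]
  exact h x

theorem inv_smul_vecMulVec_vec_le_one_kronecker_mul_transpose [Fintype m] [Fintype n]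
    [DecidableEq n] {r : ℕ} (hr : 0 < r) {G : Matrix m n ℝ} (hG : G.rank ≤ r) :
    (r : ℝ)⁻¹ • vecMulVec (vec G) (vec G) ≤ 1 ⊗ₖ (G * Gᵀ) := by
  refine inv_smul_vecMulVec_le (by positivity) ?_ fun x => ?_
  · exact (PosSemidef.one.kronecker (posSemidef_self_mul_conjTranspose G)).isHermitian
  obtain ⟨X, rfl⟩ := vec_bijective.surjective x
  have hK := trace_sq_le_of_rank_le ((rank_mul_le_right Xᵀ G).trans hG)
  rw [← trace_transpose, transpose_mul, transpose_transpose] at hK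
  rw [kronecker_mulVec_vec, vec_dotProduct_vec, vec_dotProduct_vec, transpose_one,
    Matrix.mul_one]
  simpa only [Matrix.mul_assoc] using hK

theorem inv_smul_vecMulVec_vec_le_transpose_mul_kronecker_one [Fintype m] [Fintype n]
    [DecidableEq m] {r : ℕ} (hr : 0 < r) {G : Matrix m n ℝ} (hG : G.rank ≤ r) :
    (r : ℝ)⁻¹ • vecMulVec (vec G) (vec G) ≤ (Gᵀ * G) ⊗ₖ 1 := by
  refine inv_smul_vecMulVec_le (by positivity) ?_ fun x => ?_
  · exact ((posSemidef_conjTranspose_mul_self G).kronecker PosSemidef.one).isHermitian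
  obtain ⟨X, rfl⟩ := vec_bijective.surjective x
  have hK := trace_sq_le_of_rank_le
    (((rank_mul_le_right X Gᵀ).trans_eq (rank_transpose G)).trans hG)
  have hquad : (X * Gᵀ * (X * Gᵀ)ᵀ).trace = (Xᵀ * (X * (Gᵀ * G))).trace := by
    rw [transpose_mul, transpose_transpose, ← Matrix.mul_assoc, trace_mul_comm]
    simp only [Matrix.mul_assoc]
  rw [trace_mul_comm X, hquad] at hK
  rw [kronecker_mulVec_vec, vec_dotProduct_vec, vec_dotProduct_vec, Matrix.one_mul,
    transpose_mul, transpose_transpose]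
  simpa only [Matrix.mul_assoc] using hK

theorem sum_kronecker {l p q α : Type*} [NonUnitalNonAssocSemiring α] (s : Finset ι)
    (A : ι → Matrix l m α) (B : Matrix p q α) : (∑ i ∈ s, A i) ⊗ₖ B = ∑ i ∈ s, A i ⊗ₖ B := by
  ext
  simp [kroneckerMap_apply, sum_apply, Finset.sum_mul]

theorem kronecker_sum {l p q α : Type*} [NonUnitalNonAssocSemiring α] (s : Finset ι)
    (A : Matrix l m α) (B : ι → Matrix p q α) : A ⊗ₖ (∑ i ∈ s, B i) = ∑ i ∈ s, A ⊗ₖ B i := by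
  ext
  simp [kroneckerMap_apply, sum_apply, Finset.mul_sum]

open scoped ComplexOrder in
theorem PosSemidef.sqrt_eq_cfcSqrt {𝕜 : Type*} [RCLike 𝕜] [Fintype n] [DecidableEq n]
    {A : Matrix n n 𝕜} (hA : A.PosSemidef) : hA.sqrt = CFC.sqrt A := by
  rw [CFC.sqrt_eq_cfc, cfc_nnreal_eq_real _ A, hA.1.cfc_eq]
  simp only [IsHermitian.cfc, PosSemidef.sqrt, Unitary.conjStarAlgAut_apply]
  congr 3
  ext i
  simp [Real.coe_sqrt, Real.coe_toNNReal', hA.eigenvalues_nonneg i]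

end Matrix

/-- Shampoo's upper bound (Gupta–Koren–Singer): if each `G t` has rank at most
`r`, then `ε I + (1/r) ∑ₜ gₜ gₜᵀ ≼ (ε I + ∑ₜ Gₜ Gₜᵀ)^{1/2} ⊗ (ε I + ∑ₜ Gₜᵀ Gₜ)^{1/2}`
in the Loewner order (stated as: the difference is positive semidefinite). -/
theorem shampoo_adagrad_bound {m n T : ℕ} (r : ℕ) (hr : 0 < r) (ε : ℝ) (hε : 0 < ε)
    (G : Fin T → Matrix (Fin m) (Fin n) ℝ) (hrank : ∀ t, (G t).rank ≤ r)
    (hL : (ε • (1 : Matrix (Fin m) (Fin m) ℝ) + ∑ t, G t * (G t)ᵀ).PosSemidef)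
    (hR : (ε • (1 : Matrix (Fin n) (Fin n) ℝ) + ∑ t, (G t)ᵀ * G t).PosSemidef) :
    (hL.sqrt ⊗ₖ hR.sqrt -
      (ε • (1 : Matrix (Fin m × Fin n) (Fin m × Fin n) ℝ) +
        (r : ℝ)⁻¹ • ∑ t, vecMulVec (_root_.vec (G t)) (_root_.vec (G t)))).PosSemidef := by
  -- `_root_.vec G` is `Matrix.vec Gᵀ` by definition: Mathlib's `vec` stacks columns.
  have hrankT (t : Fin T) : (G t)ᵀ.rank ≤ r := (rank_transpose _).trans_le (hrank t)
  rw [hL.sqrt_eq_cfcSqrt, hR.sqrt_eq_cfcSqrt, ← le_iff]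
  refine le_sqrt_kronecker_sqrt ?_ hR.nonneg ?_ ?_ ?_
  · exact (PosDef.one.smul hε).add_posSemidef
      (posSemidef_sum _ fun t _ => posSemidef_self_mul_conjTranspose (G t))
  · exact add_nonneg (PosSemidef.one.smul hε.le).nonneg (smul_nonneg (by positivity)
      (Finset.sum_nonneg fun t _ => (posSemidef_vecMulVec_self_star _).nonneg))
  · rw [add_kronecker, smul_kronecker, one_kronecker_one, sum_kronecker, Finset.smul_sum]
    gcongr with t
    have hGt := inv_smul_vecMulVec_vec_le_transpose_mul_kronecker_one hr (hrankT t)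
    rwa [transpose_transpose] at hGt
  · rw [kronecker_add, kronecker_smul, one_kronecker_one, kronecker_sum, Finset.smul_sum]
    gcongr with t
    have hGt := inv_smul_vecMulVec_vec_le_one_kronecker_mul_transpose hr (hrankT t)
    rwa [transpose_transpose] at hGt
end

section
/- Let H ∈ ℝ^{mn×mn} be symmetric positive semidefinite, and let R̂(H) ∈ ℝ^{m²×n²} be its rearrangement. If u₁ ∈ ℝ^{m²} and v₁ ∈ ℝ^{n²} are the top left and right singular vectors of R̂(H) (corresponding to its largest singular value σ₁ > 0), then the n×n matrix V₁ with vec(V₁) = v₁ can be chosen to be positive semidefinite (i.e., after an appropriate choice of sign, V₁ is symmetric PSD). -/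
open Matrix Kronecker

/-!
Write `Ψ = choiMap H` for the map `X ↦ mat (R̂(H) vec X)`, i.e.
`Ψ(X)ₚ₁ₚ₂ = ∑ H₍ₚ₁,q₁₎₍ₚ₂,q₂₎ X_q₁q₂`. Factoring `H = BᴴB` writes `Ψ` as a sum of congruences
`X ↦ K X Kᴴ`, so `Ψ` maps PSD matrices to PSD matrices; as `H` is symmetric, `Ψ` commutes with
transposition.

Let `x = vec X` be a unit maximizer of `‖R̂(H) x‖`. The complex matrix `M = c X + c̄ Xᵀ`,
`c = (1 - i) / 2`, is Hermitian with `‖M‖ = ‖X‖` and `‖Ψ M‖ = ‖Ψ X‖ = σ`. Split `M = M⁺ - M⁻` and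
put `A = M⁺ + M⁻ ⪰ 0`. Since `M⁺ M⁻ = 0` we get `‖A‖ = ‖M‖`, and since
`re tr (Ψ M⁺ Ψ M⁻) ≥ 0` we get `‖Ψ A‖ ≥ ‖Ψ M‖`. Writing `A = W + i Z`, the real part `W` is PSD and
`‖Ψ A‖² = ‖Ψ W‖² + ‖Ψ Z‖²`. Because `σ` bounds `Ψ` on both `W` and `Z`, `W` is again a maximizer,
so `vec W` is a top right singular vector of `R̂(H)`.
-/

open scoped ComplexOrder

namespace Matrix

section ChoiMap

variable {ι κ R : Type*} [Fintype κ] [CommSemiring R]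

/-- `H` is the Choi matrix of this map, up to the order of the tensor factors. -/
def choiMap (H : Matrix (ι × κ) (ι × κ) R) : Matrix κ κ R →ₗ[R] Matrix ι ι R where
  toFun M := of fun p₁ p₂ => ∑ q₁, ∑ q₂, H (p₁, q₁) (p₂, q₂) * M q₁ q₂
  map_add' M N := by ext; simp [mul_add, Finset.sum_add_distrib]
  map_smul' c M := by ext; simp [Finset.mul_sum, mul_left_comm]

theorem choiMap_apply (H : Matrix (ι × κ) (ι × κ) R) (M : Matrix κ κ R) (p₁ p₂ : ι) :
    choiMap H M p₁ p₂ = ∑ q₁, ∑ q₂, H (p₁, q₁) (p₂, q₂) * M q₁ q₂ := rfl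

theorem choiMap_map {S : Type*} [CommSemiring S] (f : R →+* S) (H : Matrix (ι × κ) (ι × κ) R)
    (M : Matrix κ κ R) : choiMap (H.map f) (M.map f) = (choiMap H M).map f := by
  ext; simp [choiMap_apply]

theorem choiMap_transpose {H : Matrix (ι × κ) (ι × κ) R} (hH : H.IsSymm) (M : Matrix κ κ R) :
    choiMap H Mᵀ = (choiMap H M)ᵀ := by
  ext p₁ p₂
  rw [transpose_apply, choiMap_apply, choiMap_apply, Finset.sum_comm]
  simp_rw [transpose_apply, ← hH.apply (p₁, _)]

theorem choiMap_ofReal_map_re (H : Matrix (ι × κ) (ι × κ) ℝ) (A : Matrix κ κ ℂ) :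
    (choiMap (H.map ((↑) : ℝ → ℂ)) A).map Complex.re = choiMap H (A.map Complex.re) := by
  ext; simp [choiMap_apply, Complex.re_sum]

theorem choiMap_ofReal_map_im (H : Matrix (ι × κ) (ι × κ) ℝ) (A : Matrix κ κ ℂ) :
    (choiMap (H.map ((↑) : ℝ → ℂ)) A).map Complex.im = choiMap H (A.map Complex.im) := by
  ext; simp [choiMap_apply, Complex.im_sum]

end ChoiMap

section Positivity

variable {ι κ 𝕜 : Type*} [Fintype ι] [Fintype κ] [RCLike 𝕜]

open scoped MatrixOrder in
theorem posSemidef_choiMap {H : Matrix (ι × κ) (ι × κ) 𝕜} (hH : H.PosSemidef)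
    {M : Matrix κ κ 𝕜} (hM : M.PosSemidef) : (choiMap H M).PosSemidef := by
  classical
  obtain ⟨B, rfl⟩ := CStarAlgebra.nonneg_iff_eq_star_mul_self.mp hH.nonneg
  let K : ι × κ → Matrix ι κ 𝕜 := fun t => of fun p q => star (B t (p, q))
  have hK : choiMap (star B * B) M = ∑ t, K t * M * (K t)ᴴ := by
    ext p₁ p₂
    simp only [choiMap_apply, sum_apply, mul_apply, conjTranspose_apply, star_apply, K, of_apply,
      star_star, Finset.sum_mul]
    conv_rhs => rw [Finset.sum_comm]; enter [2, q₂]; rw [Finset.sum_comm]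
    rw [Finset.sum_comm]
    exact Fintype.sum_congr _ _ fun _ => Fintype.sum_congr _ _ fun _ =>
      Fintype.sum_congr _ _ fun _ => mul_right_comm _ _ _
  rw [hK]
  exact posSemidef_sum _ fun t _ => hM.mul_mul_conjTranspose_same (K t)

def frobeniusNormSq (A : Matrix ι κ 𝕜) : ℝ := ∑ i, ∑ j, ‖A i j‖ ^ 2

theorem frobeniusNormSq_add_eq_sub_add {P Q : Matrix κ κ 𝕜} (hP : P.IsHermitian) :
    frobeniusNormSq (P + Q) = frobeniusNormSq (P - Q) + 4 * RCLike.re (P * Q).trace := by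
  have hentry (a b : 𝕜) : ‖a + b‖ ^ 2 = ‖a - b‖ ^ 2 + 4 * RCLike.re (star a * b) := by
    rw [@norm_add_sq 𝕜, @norm_sub_sq 𝕜, RCLike.inner_apply, RCLike.star_def,
      mul_comm (starRingEnd 𝕜 a)]
    ring
  simp only [frobeniusNormSq, add_apply, sub_apply, hentry, Finset.sum_add_distrib,
    ← Finset.mul_sum]
  congr 2
  rw [trace, map_sum, Finset.sum_comm]
  simp only [diag_apply, mul_apply, map_sum, hP.apply]

open scoped MatrixOrder in
theorem PosSemidef.re_trace_mul_nonneg {P Q : Matrix κ κ 𝕜} (hP : P.PosSemidef)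
    (hQ : Q.PosSemidef) : 0 ≤ RCLike.re (P * Q).trace := by
  classical
  obtain ⟨B, rfl⟩ := CStarAlgebra.nonneg_iff_eq_star_mul_self.mp hP.nonneg
  rw [mul_assoc, trace_mul_comm, star_eq_conjTranspose]
  exact (RCLike.nonneg_iff.mp (hQ.mul_mul_conjTranspose_same B).trace_nonneg).1

open scoped MatrixOrder in
theorem exists_posSemidef_frobeniusNormSq_eq_choiMap_le [DecidableEq κ]
    {H : Matrix (ι × κ) (ι × κ) 𝕜} (hH : H.PosSemidef) {M : Matrix κ κ 𝕜} (hM : M.IsHermitian) :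
    ∃ A : Matrix κ κ 𝕜, A.PosSemidef ∧ frobeniusNormSq A = frobeniusNormSq M ∧
      frobeniusNormSq (choiMap H M) ≤ frobeniusNormSq (choiMap H A) := by
  have hpos : (M⁺).PosSemidef := (CFC.posPart_nonneg M).posSemidef
  have hneg : (M⁻).PosSemidef := (CFC.negPart_nonneg M).posSemidef
  have hsub : M⁺ - M⁻ = M := CFC.posPart_sub_negPart M hM.isSelfAdjoint
  refine ⟨M⁺ + M⁻, hpos.add hneg, ?_, ?_⟩
  · rw [frobeniusNormSq_add_eq_sub_add hpos.isHermitian, hsub, CFC.posPart_mul_negPart]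
    simp
  · rw [map_add, frobeniusNormSq_add_eq_sub_add (posSemidef_choiMap hH hpos).isHermitian,
      ← map_sub, hsub]
    linarith [(posSemidef_choiMap hH hpos).re_trace_mul_nonneg (posSemidef_choiMap hH hneg)]

open scoped MatrixOrder in
theorem PosSemidef.map_ofReal {A : Matrix κ κ ℝ} (hA : A.PosSemidef) :
    (A.map ((↑) : ℝ → ℂ)).PosSemidef := by
  classical
  obtain ⟨B, rfl⟩ := CStarAlgebra.nonneg_iff_eq_star_mul_self.mp hA.nonneg
  convert posSemidef_conjTranspose_mul_self (B.map ((↑) : ℝ → ℂ)) using 1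
  ext; simp [mul_apply]

open scoped MatrixOrder in
theorem PosSemidef.map_re {A : Matrix κ κ ℂ} (hA : A.PosSemidef) :
    (A.map Complex.re).PosSemidef := by
  classical
  obtain ⟨B, rfl⟩ := CStarAlgebra.nonneg_iff_eq_star_mul_self.mp hA.nonneg
  have h : (star B * B).map Complex.re =
      (B.map Complex.re)ᴴ * B.map Complex.re + (B.map Complex.im)ᴴ * B.map Complex.im := by
    ext i j
    simp [mul_apply, Complex.re_sum, ← Finset.sum_add_distrib]
  rw [h]
  exact (posSemidef_conjTranspose_mul_self _).add (posSemidef_conjTranspose_mul_self _)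

theorem PosSemidef.eq_zero_of_map_re_eq_zero {A : Matrix κ κ ℂ} (hA : A.PosSemidef)
    (h : A.map Complex.re = 0) : A = 0 := by
  refine hA.trace_eq_zero_iff.mp ?_
  have hdiag (i : κ) : (A i i).re = 0 := by simpa using congrFun₂ h i i
  rw [trace, ← hA.isHermitian.coe_re_diag]
  simp [hdiag]

theorem frobeniusNormSq_eq_re_add_im (A : Matrix ι κ ℂ) :
    frobeniusNormSq A =
      frobeniusNormSq (A.map Complex.re) + frobeniusNormSq (A.map Complex.im) := by
  simp only [frobeniusNormSq, ← Finset.sum_add_distrib, map_apply, Real.norm_eq_abs, sq_abs,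
    Complex.sq_norm, Complex.normSq_apply]
  simp only [sq]

end Positivity

section HermitianLift

variable {ι κ : Type*}

noncomputable def hermitianLift (X : Matrix κ κ ℝ) : Matrix κ κ ℂ :=
  ((1 - Complex.I) / 2) • X.map (↑) + ((1 + Complex.I) / 2) • Xᵀ.map (↑)

theorem isHermitian_hermitianLift (X : Matrix κ κ ℝ) : (hermitianLift X).IsHermitian := by
  ext i j
  simp only [conjTranspose_apply, hermitianLift, add_apply, smul_apply, map_apply, transpose_apply,
    smul_eq_mul, star_add, star_mul', Complex.star_def, map_div₀, map_sub, map_add, map_one,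
    Complex.conj_I, Complex.conj_ofReal, map_ofNat]
  ring

theorem frobeniusNormSq_hermitianLift [Fintype κ] (X : Matrix κ κ ℝ) :
    frobeniusNormSq (hermitianLift X) = frobeniusNormSq X := by
  have hentry (a b : ℝ) :
      ‖(1 - Complex.I) / 2 * a + (1 + Complex.I) / 2 * b‖ ^ 2 = (a ^ 2 + b ^ 2) / 2 := by
    rw [Complex.sq_norm, Complex.normSq_apply]
    simp
    ring
  simp only [frobeniusNormSq, hermitianLift, add_apply, smul_apply, map_apply, transpose_apply,
    smul_eq_mul, hentry]
  simp only [add_div, Finset.sum_add_distrib, ← Finset.sum_div, Real.norm_eq_abs, sq_abs]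
  rw [Finset.sum_comm (f := fun i j => X j i ^ 2)]
  ring

theorem choiMap_hermitianLift [Fintype κ] {H : Matrix (ι × κ) (ι × κ) ℝ} (hH : H.IsSymm)
    (X : Matrix κ κ ℝ) :
    choiMap (H.map ((↑) : ℝ → ℂ)) (hermitianLift X) = hermitianLift (choiMap H X) := by
  have hmap (Y : Matrix κ κ ℝ) :
      choiMap (H.map ((↑) : ℝ → ℂ)) (Y.map (↑)) = (choiMap H Y).map (↑) :=
    choiMap_map Complex.ofRealHom H Y
  simp only [hermitianLift, map_add, map_smul, hmap, choiMap_transpose hH]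

end HermitianLift

section SingularVectors

variable {α β : Type*} [Fintype α] [Fintype β] {R : Matrix α β ℝ} {σ : ℝ}

theorem transpose_mulVec_mulVec_eq_of_isMaximizer
    (htop : ∀ x : β → ℝ, ∑ p, (R *ᵥ x) p ^ 2 ≤ σ ^ 2 * ∑ q, x q ^ 2) {w : β → ℝ}
    (hw : ∑ p, (R *ᵥ w) p ^ 2 = σ ^ 2 * ∑ q, w q ^ 2) :
    Rᵀ *ᵥ (R *ᵥ w) = σ ^ 2 • w := by
  classical
  set B : Matrix β β ℝ := σ ^ 2 • 1 - Rᵀ * R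
  have hquad (x : β → ℝ) : star x ⬝ᵥ B *ᵥ x = σ ^ 2 * ∑ q, x q ^ 2 - ∑ p, (R *ᵥ x) p ^ 2 := by
    rw [star_trivial, sub_mulVec, smul_mulVec, one_mulVec, dotProduct_sub, dotProduct_smul,
      ← mulVec_mulVec, dotProduct_mulVec, vecMul_transpose, smul_eq_mul]
    simp only [dotProduct, sq]
  have hB : B.PosSemidef := by
    refine posSemidef_iff_dotProduct_mulVec.mpr ⟨?_, fun x => ?_⟩
    · simp [B, IsHermitian, conjTranspose_eq_transpose_of_trivial, transpose_sub]
    · rw [hquad]; linarith [htop x]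
  have hBw : B *ᵥ w = 0 := (hB.dotProduct_mulVec_zero_iff w).mp (by rw [hquad, hw, sub_self])
  rw [sub_mulVec, smul_mulVec, one_mulVec, sub_eq_zero] at hBw
  rw [mulVec_mulVec, hBw]

theorem exists_singular_pair_of_isMaximizer (hσ : 0 < σ)
    (htop : ∀ x : β → ℝ, ∑ p, (R *ᵥ x) p ^ 2 ≤ σ ^ 2 * ∑ q, x q ^ 2) {w : β → ℝ} (hw0 : w ≠ 0)
    (hw : ∑ p, (R *ᵥ w) p ^ 2 = σ ^ 2 * ∑ q, w q ^ 2) :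
    ∃ c : ℝ, 0 < c ∧ ∃ u : α → ℝ, ∑ p, u p ^ 2 = 1 ∧ ∑ q, (c • w) q ^ 2 = 1 ∧
      R *ᵥ (c • w) = σ • u ∧ Rᵀ *ᵥ u = σ • c • w := by
  have hpos : 0 < ∑ q, w q ^ 2 := by
    obtain ⟨q, hq⟩ := Function.ne_iff.mp hw0
    exact Finset.sum_pos' (fun _ _ => sq_nonneg _) ⟨q, Finset.mem_univ _, sq_pos_of_ne_zero hq⟩
  set s := √(∑ q, w q ^ 2)
  have hs : 0 < s := Real.sqrt_pos.mpr hpos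
  have hs2 : s ^ 2 = ∑ q, w q ^ 2 := Real.sq_sqrt hpos.le
  refine ⟨s⁻¹, inv_pos.mpr hs, σ⁻¹ • R *ᵥ (s⁻¹ • w), ?_, ?_, ?_, ?_⟩
  · simp only [mulVec_smul, Pi.smul_apply, smul_eq_mul, mul_pow, ← Finset.mul_sum]
    rw [hw, ← hs2]
    field_simp
  · simp only [Pi.smul_apply, smul_eq_mul, mul_pow, ← Finset.mul_sum]
    rw [← hs2]
    field_simp
  · rw [smul_smul, mul_inv_cancel₀ hσ.ne', one_smul]
  · rw [mulVec_smul, mulVec_smul, mulVec_smul, transpose_mulVec_mulVec_eq_of_isMaximizer htop hw,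
      smul_smul, smul_smul, smul_smul]
    congr 1
    field_simp

end SingularVectors

end Matrix

theorem vec_choiMap {m n : ℕ} (H : Matrix (Fin m × Fin n) (Fin m × Fin n) ℝ)
    (X : Matrix (Fin n) (Fin n) ℝ) : _root_.vec (choiMap H X) = rearrange H *ᵥ _root_.vec X := by
  ext p
  simp [_root_.vec, choiMap_apply, rearrange, mulVec, dotProduct, Fintype.sum_prod_type]

theorem sum_vec_sq {m n : ℕ} (X : Matrix (Fin m) (Fin n) ℝ) :
    ∑ q, _root_.vec X q ^ 2 = frobeniusNormSq X := by
  simp [_root_.vec, frobeniusNormSq, Fintype.sum_prod_type]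

/-- (van Loan–Pitsianis) Let `H` be symmetric PSD, and let `σ > 0` be the largest
singular value of `R̂(H)` (i.e. `σ` bounds the ℓ²→ℓ² action of `R̂(H)` and is attained).
Then there is a top singular vector pair `(u₁, v₁)` of `R̂(H)` for `σ` such that the
`n × n` matrix `V₁` with `vec(V₁) = v₁` is positive semidefinite. -/
theorem top_right_singular_factor_posSemidef {m n : ℕ}
    (H : Matrix (Fin m × Fin n) (Fin m × Fin n) ℝ) (hH : H.PosSemidef)
    (σ : ℝ) (hσ : 0 < σ)
    (htop : ∀ x : Fin n × Fin n → ℝ,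
      ∑ p, ((rearrange H) *ᵥ x) p ^ 2 ≤ σ ^ 2 * ∑ q, x q ^ 2)
    (hattained : ∃ x : Fin n × Fin n → ℝ, (∑ q, x q ^ 2) = 1 ∧
      ∑ p, ((rearrange H) *ᵥ x) p ^ 2 = σ ^ 2) :
    ∃ (u : Fin m × Fin m → ℝ) (v : Fin n × Fin n → ℝ),
      (∑ p, u p ^ 2) = 1 ∧ (∑ q, v q ^ 2) = 1 ∧
      (rearrange H) *ᵥ v = σ • u ∧ (rearrange H)ᵀ *ᵥ u = σ • v ∧
      (Matrix.of fun i j => v (i, j)).PosSemidef := by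
  obtain ⟨x, hx, hRx⟩ := hattained
  have hHsymm : H.IsSymm := by simpa [IsSymm] using hH.isHermitian
  have hx_vec : _root_.vec (of fun i j => x (i, j)) = x := rfl
  obtain ⟨A, hA, hAnorm, hAimage⟩ := exists_posSemidef_frobeniusNormSq_eq_choiMap_le
    hH.map_ofReal (isHermitian_hermitianLift (of fun i j => x (i, j)))
  rw [frobeniusNormSq_eq_re_add_im, frobeniusNormSq_hermitianLift, ← sum_vec_sq, ← sum_vec_sq,
    ← sum_vec_sq, hx_vec, hx] at hAnorm
  rw [choiMap_hermitianLift hHsymm, frobeniusNormSq_hermitianLift, frobeniusNormSq_eq_re_add_im,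
    choiMap_ofReal_map_re, choiMap_ofReal_map_im, ← sum_vec_sq, ← sum_vec_sq, ← sum_vec_sq,
    vec_choiMap, vec_choiMap, vec_choiMap, hx_vec, hRx] at hAimage
  have hW : ∑ p, (rearrange H *ᵥ _root_.vec (A.map Complex.re)) p ^ 2 =
      σ ^ 2 * ∑ q, _root_.vec (A.map Complex.re) q ^ 2 :=
    le_antisymm (htop _) (by nlinarith [htop (_root_.vec (A.map Complex.im))])
  have hW0 : _root_.vec (A.map Complex.re) ≠ 0 := by
    intro h
    have hA0 : A = 0 := hA.eq_zero_of_map_re_eq_zero (by ext i j; exact congrFun h (i, j))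
    simp [hA0, _root_.vec] at hAnorm
  obtain ⟨c, hc, u, hu, hv, hRv, hRu⟩ := exists_singular_pair_of_isMaximizer hσ htop hW0 hW
  exact ⟨u, _, hu, hv, hRv, hRu, hA.map_re.smul hc.le⟩
end

section
/- Let S_q denote the set of symmetric positive semidefinite q×q real matrices of unit Frobenius norm. Then the matrix (1/√q) I_q is the unique maximizer over M ∈ S_q of min_{M' ∈ S_q} ⟨M, M'⟩, where ⟨M, M'⟩ = Tr(M M'). Moreover the optimal value equals 1/√q. -/
/-!
The trace pairing of two PSD matrices is nonnegative, and a PSD matrix of unit Frobenius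
norm has trace at least one (because `M i j ^ 2 ≤ M i i * M j j`), so `c • 1` with
`c = 1/√q` pairs to at least `c` with every element of `S_q`; rank-one projections show
that this is attained. If `M ∈ S_q` had `vᵀ M v ≥ c ‖v‖²` for all `v`, then `N = M - c • 1`
would be PSD, and expanding `‖c • 1 + N‖_F² = 1 = ‖c • 1‖_F²` gives
`2 c Tr N + ‖N‖_F² = 0`, forcing `N = 0`. Hence any other `M` has a unit vector `v` with
`vᵀ M v < c`, and `v vᵀ ∈ S_q` witnesses `minInner M < c`.
-/

open Matrix

/-- `unitPSD q` is the set `S_q` of symmetric PSD `q × q` matrices of unit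
Frobenius norm. -/
def unitPSD (q : ℕ) : Set (Matrix (Fin q) (Fin q) ℝ) :=
  {M | M.PosSemidef ∧ ∑ i, ∑ j, (M i j) ^ 2 = 1}

/-- `minInner q M = min_{M' ∈ S_q} ⟨M, M'⟩` where `⟨M, M'⟩ = Tr(M M')`. -/
noncomputable def minInner (q : ℕ) (M : Matrix (Fin q) (Fin q) ℝ) : ℝ :=
  sInf ((fun M' => (M * M').trace) '' unitPSD q)

namespace Matrix

variable {n : Type*}

open scoped ComplexOrder in
lemma PosSemidef.trace_mul_nonneg [Fintype n] {𝕜 : Type*} [RCLike 𝕜] {A B : Matrix n n 𝕜}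
    (hA : A.PosSemidef) (hB : B.PosSemidef) : 0 ≤ (A * B).trace := by
  classical
  open scoped MatrixOrder in
  obtain ⟨C, rfl⟩ := CStarAlgebra.nonneg_iff_eq_star_mul_self.mp hA.nonneg
  rw [Matrix.mul_assoc, trace_mul_comm]
  exact (hB.mul_mul_conjTranspose_same C).trace_nonneg

lemma PosSemidef.sq_apply_le_mul_diag {M : Matrix n n ℝ} (hM : M.PosSemidef) (i j : n) :
    M i j ^ 2 ≤ M i i * M j j := by
  have hdet := (hM.submatrix ![i, j]).det_nonneg
  rw [det_fin_two] at hdet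
  have hsymm : M j i = M i j := hM.1.apply i j
  simp only [submatrix_apply, Matrix.cons_val_zero, Matrix.cons_val_one, hsymm] at hdet
  nlinarith

lemma PosSemidef.sum_sq_apply_le_trace_sq [Fintype n] {M : Matrix n n ℝ} (hM : M.PosSemidef) :
    ∑ i, ∑ j, M i j ^ 2 ≤ M.trace ^ 2 :=
  calc ∑ i, ∑ j, M i j ^ 2 ≤ ∑ i, ∑ j, M i i * M j j := by
        gcongr with i _ j _
        exact hM.sq_apply_le_mul_diag i j
    _ = M.trace ^ 2 := by rw [sq, trace, Finset.sum_mul_sum]; rfl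

lemma sum_sq_smul_one_add_apply [Fintype n] [DecidableEq n] (c : ℝ) (N : Matrix n n ℝ) :
    ∑ i, ∑ j, (c • 1 + N) i j ^ 2
      = Fintype.card n * c ^ 2 + 2 * c * N.trace + ∑ i, ∑ j, N i j ^ 2 := by
  simp only [add_apply, smul_apply, one_apply, smul_eq_mul, add_sq, mul_ite, mul_one, mul_zero,
    Finset.sum_add_distrib, ite_pow, zero_pow two_ne_zero, ite_mul, zero_mul, Finset.sum_ite_eq,
    Finset.mem_univ, if_true, Finset.sum_const, Finset.card_univ, nsmul_eq_mul, trace, diag,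
    Finset.mul_sum]

lemma eq_smul_one_of_posSemidef_sub [Fintype n] [DecidableEq n] {c : ℝ} (hc : 0 < c)
    {M : Matrix n n ℝ} (hM : (M - c • 1).PosSemidef)
    (hnorm : ∑ i, ∑ j, M i j ^ 2 = Fintype.card n * c ^ 2) :
    M = c • 1 := by
  have hexpand := sum_sq_smul_one_add_apply c (M - c • 1)
  rw [add_sub_cancel, hnorm] at hexpand
  have htrace : (M - c • 1).trace = 0 := by
    have htrace_nonneg := hM.trace_nonneg
    have hsq_nonneg : 0 ≤ ∑ i, ∑ j, (M - c • 1) i j ^ 2 := by positivity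
    nlinarith
  exact sub_eq_zero.mp (hM.trace_eq_zero_iff.mp htrace)

end Matrix

variable {q : ℕ}

lemma one_le_trace_of_mem_unitPSD {M : Matrix (Fin q) (Fin q) ℝ} (hM : M ∈ unitPSD q) :
    1 ≤ M.trace := by
  have h := hM.1.sum_sq_apply_le_trace_sq
  rw [hM.2] at h
  exact (one_le_sq_iff₀ hM.1.trace_nonneg).mp h

lemma inv_dotProduct_smul_vecMulVec_mem_unitPSD {v : Fin q → ℝ} (hv : v ≠ 0) :
    (v ⬝ᵥ v)⁻¹ • vecMulVec v v ∈ unitPSD q := by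
  have hvv : v ⬝ᵥ v ≠ 0 := dotProduct_self_eq_zero.not.mpr hv
  refine ⟨?_, ?_⟩
  · simpa using (posSemidef_vecMulVec_self_star v).smul
      (inv_nonneg.mpr (dotProduct_self_star_nonneg v))
  · simp only [Matrix.smul_apply, vecMulVec_apply, smul_eq_mul, mul_pow, ← Finset.mul_sum,
      ← Finset.sum_mul]
    rw [show ∑ i, v i ^ 2 = v ⬝ᵥ v by simp [dotProduct, sq]]
    field_simp

lemma bddBelow_trace_mul_image {M : Matrix (Fin q) (Fin q) ℝ} (hM : M.PosSemidef) :
    BddBelow ((fun M' => (M * M').trace) '' unitPSD q) :=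
  ⟨0, by rintro _ ⟨M', hM', rfl⟩; exact hM.trace_mul_nonneg hM'.1⟩

lemma minInner_le_dotProduct_mulVec_div {M : Matrix (Fin q) (Fin q) ℝ} (hM : M.PosSemidef)
    {v : Fin q → ℝ} (hv : v ≠ 0) : minInner q M ≤ v ⬝ᵥ (M *ᵥ v) / (v ⬝ᵥ v) := by
  refine csInf_le (bddBelow_trace_mul_image hM)
    ⟨_, inv_dotProduct_smul_vecMulVec_mem_unitPSD hv, ?_⟩
  simp only [Matrix.mul_smul, mul_vecMulVec, trace_smul, trace_vecMulVec, smul_eq_mul,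
    dotProduct_comm (M *ᵥ v), div_eq_inv_mul]

/-- `(1/√q) I_q` is the unique maximizer over `M ∈ S_q` of
`min_{M' ∈ S_q} ⟨M, M'⟩`, and the optimal value is `1/√q`. -/
theorem identity_maximizes_min_inner (q : ℕ) (hq : 0 < q) :
    ((Real.sqrt q)⁻¹ • (1 : Matrix (Fin q) (Fin q) ℝ)) ∈ unitPSD q ∧
    minInner q ((Real.sqrt q)⁻¹ • (1 : Matrix (Fin q) (Fin q) ℝ)) = (Real.sqrt q)⁻¹ ∧
    ∀ M ∈ unitPSD q, M ≠ (Real.sqrt q)⁻¹ • (1 : Matrix (Fin q) (Fin q) ℝ) →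
      minInner q M < (Real.sqrt q)⁻¹ := by
  set c := (Real.sqrt q)⁻¹
  have hc : 0 < c := by positivity
  have hqc : (q : ℝ) * c ^ 2 = 1 := by
    rw [inv_pow, Real.sq_sqrt (Nat.cast_nonneg q)]
    exact mul_inv_cancel₀ (by positivity)
  have hmem : c • (1 : Matrix (Fin q) (Fin q) ℝ) ∈ unitPSD q := by
    refine ⟨.smul .one hc.le, ?_⟩
    simpa [hqc] using sum_sq_smul_one_add_apply c (0 : Matrix (Fin q) (Fin q) ℝ)
  refine ⟨hmem, le_antisymm ?_ ?_, ?_⟩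
  · have hv : (Pi.single ⟨0, hq⟩ 1 : Fin q → ℝ) ≠ 0 := by simp
    simpa using minInner_le_dotProduct_mulVec_div hmem.1 hv
  · refine le_csInf (Set.Nonempty.image _ ⟨_, hmem⟩) ?_
    rintro _ ⟨M', hM', rfl⟩
    simpa [Matrix.smul_mul, trace_smul] using
      mul_le_mul_of_nonneg_left (one_le_trace_of_mem_unitPSD hM') hc.le
  · intro M hM hne
    obtain ⟨v, hv⟩ : ∃ v, v ⬝ᵥ (M *ᵥ v) < c * (v ⬝ᵥ v) := by
      by_contra! h
      refine hne (eq_smul_one_of_posSemidef_sub hc ?_ (by rw [hM.2, Fintype.card_fin, hqc]))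
      refine .of_dotProduct_mulVec_nonneg (hM.1.1.sub hmem.1.1) fun x => ?_
      simpa [sub_mulVec, smul_mulVec, dotProduct_sub] using h x
    have hv0 : v ≠ 0 := by rintro rfl; simp at hv
    have hvv : 0 < v ⬝ᵥ v := by simpa using dotProduct_self_star_pos_iff.mpr hv0
    calc minInner q M ≤ v ⬝ᵥ (M *ᵥ v) / (v ⬝ᵥ v) :=
          minInner_le_dotProduct_mulVec_div hM.1 hv0
      _ < c := (div_lt_iff₀ hvv).2 hv
end

section
/- Suppose H ∈ ℝ^{mn×mn} is such that its rearrangement R̂(H) ∈ ℝ^{m²×n²} has rank one, i.e., H = σ U ⊗ V with vec(U), vec(V) unit vectors, σ > 0, and Tr(U) ≠ 0, Tr(V) ≠ 0. Define L ∈ ℝ^{m×m} and R ∈ ℝ^{n×n} by the one-step power-iteration formulas vec(L) = R̂(H) vec(I_n) and vec(R) = R̂(H)ᵀ vec(I_m). Then L = σ Tr(V) U, R = σ Tr(U) V, Tr(L) = σ Tr(U) Tr(V), and H = (L ⊗ R)/Tr(L). -/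
open Matrix Kronecker

/-! The rearrangement of `σ • (U ⊗ₖ V)` is the rank-one matrix `σ • vec U (vec V)ᵀ`, and pairing
with `vec 1` takes traces, so one power-iteration step returns `L = σ Tr(V) U` and
`R = σ Tr(U) V`. Then `L ⊗ₖ R = σ Tr(U) Tr(V) • H = Tr(L) • H`. -/

-- Mathlib's `Matrix.vec` stacks columns, this `vec` stacks rows.
theorem vec_eq_vec_transpose {m n : ℕ} (M : Matrix (Fin m) (Fin n) ℝ) :
    _root_.vec M = Mᵀ.vec :=
  rfl

theorem vec_injective {m n : ℕ} :
    Function.Injective (_root_.vec : Matrix (Fin m) (Fin n) ℝ → _) := fun A B h => by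
  rwa [vec_eq_vec_transpose, vec_eq_vec_transpose, Matrix.vec_inj, transpose_inj] at h

theorem vec_smul {m n : ℕ} (c : ℝ) (M : Matrix (Fin m) (Fin n) ℝ) :
    _root_.vec (c • M) = c • _root_.vec M :=
  rfl

theorem vec_dotProduct_vec_one {n : ℕ} (M : Matrix (Fin n) (Fin n) ℝ) :
    _root_.vec M ⬝ᵥ _root_.vec (1 : Matrix (Fin n) (Fin n) ℝ) = M.trace := by
  rw [vec_eq_vec_transpose, vec_eq_vec_transpose, Matrix.vec_dotProduct_vec, transpose_transpose,
    transpose_one, mul_one]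

theorem rearrange_smul {m n : ℕ} (c : ℝ) (H : Matrix (Fin m × Fin n) (Fin m × Fin n) ℝ) :
    rearrange (c • H) = c • rearrange H :=
  rfl

theorem rearrange_smul_kronecker_mulVec_vec_one {m n : ℕ} (c : ℝ)
    (A : Matrix (Fin m) (Fin m) ℝ) (B : Matrix (Fin n) (Fin n) ℝ) :
    rearrange (c • (A ⊗ₖ B)) *ᵥ _root_.vec (1 : Matrix (Fin n) (Fin n) ℝ) =
      _root_.vec ((c * B.trace) • A) := by
  rw [rearrange_smul, rearrange_kronecker, smul_mulVec, vecMulVec_mulVec, op_smul_eq_smul,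
    vec_dotProduct_vec_one, smul_smul, vec_smul]

theorem rearrange_smul_kronecker_transpose_mulVec_vec_one {m n : ℕ} (c : ℝ)
    (A : Matrix (Fin m) (Fin m) ℝ) (B : Matrix (Fin n) (Fin n) ℝ) :
    (rearrange (c • (A ⊗ₖ B)))ᵀ *ᵥ _root_.vec (1 : Matrix (Fin m) (Fin m) ℝ) =
      _root_.vec ((c * A.trace) • B) := by
  rw [rearrange_smul, rearrange_kronecker, transpose_smul, transpose_vecMulVec, smul_mulVec,
    vecMulVec_mulVec, op_smul_eq_smul, vec_dotProduct_vec_one, smul_smul, vec_smul]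

theorem rank_one_rearrangement_recovery_general {m n : ℕ}
    (H : Matrix (Fin m × Fin n) (Fin m × Fin n) ℝ)
    (σ : ℝ) (hσ : 0 < σ)
    (U : Matrix (Fin m) (Fin m) ℝ) (V : Matrix (Fin n) (Fin n) ℝ)
    (htU : U.trace ≠ 0) (htV : V.trace ≠ 0)
    (hH : H = σ • (U ⊗ₖ V))
    (L : Matrix (Fin m) (Fin m) ℝ) (R : Matrix (Fin n) (Fin n) ℝ)
    (hLdef : _root_.vec L = (rearrange H) *ᵥ _root_.vec (1 : Matrix (Fin n) (Fin n) ℝ))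
    (hRdef : _root_.vec R = (rearrange H)ᵀ *ᵥ _root_.vec (1 : Matrix (Fin m) (Fin m) ℝ)) :
    L = (σ * V.trace) • U ∧ R = (σ * U.trace) • V ∧
    L.trace = σ * U.trace * V.trace ∧
    H = (L.trace)⁻¹ • (L ⊗ₖ R) := by
  subst hH
  have hL : L = (σ * V.trace) • U :=
    vec_injective (hLdef.trans (rearrange_smul_kronecker_mulVec_vec_one σ U V))
  have hR : R = (σ * U.trace) • V :=
    vec_injective (hRdef.trans (rearrange_smul_kronecker_transpose_mulVec_vec_one σ U V))
  have htL : L.trace = σ * U.trace * V.trace := by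
    rw [hL, trace_smul, smul_eq_mul]
    ring
  refine ⟨hL, hR, htL, ?_⟩
  rw [htL, hL, hR, smul_kronecker, kronecker_smul, smul_smul, smul_smul]
  congr 1
  field_simp [hσ.ne']

/-- If `R̂(H)` has rank one, i.e. `H = σ U ⊗ V` with `vec U, vec V` unit vectors,
`σ > 0` and `Tr U ≠ 0`, `Tr V ≠ 0`, then the one-step power-iteration matrices
`L, R` (with `vec L = R̂(H) vec(Iₙ)`, `vec R = R̂(H)ᵀ vec(Iₘ)`) satisfy
`L = σ Tr(V) U`, `R = σ Tr(U) V`, `Tr L = σ Tr(U) Tr(V)` and `H = (L ⊗ R)/Tr(L)`. -/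
theorem rank_one_rearrangement_recovery {m n : ℕ}
    (H : Matrix (Fin m × Fin n) (Fin m × Fin n) ℝ)
    (σ : ℝ) (hσ : 0 < σ)
    (U : Matrix (Fin m) (Fin m) ℝ) (V : Matrix (Fin n) (Fin n) ℝ)
    (hU : ∑ i, ∑ j, (U i j) ^ 2 = 1) (hV : ∑ i, ∑ j, (V i j) ^ 2 = 1)
    (htU : U.trace ≠ 0) (htV : V.trace ≠ 0)
    (hH : H = σ • (U ⊗ₖ V))
    (L : Matrix (Fin m) (Fin m) ℝ) (R : Matrix (Fin n) (Fin n) ℝ)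
    (hLdef : _root_.vec L = (rearrange H) *ᵥ _root_.vec (1 : Matrix (Fin n) (Fin n) ℝ))
    (hRdef : _root_.vec R = (rearrange H)ᵀ *ᵥ _root_.vec (1 : Matrix (Fin m) (Fin m) ℝ)) :
    L = (σ * V.trace) • U ∧ R = (σ * U.trace) • V ∧
    L.trace = σ * U.trace * V.trace ∧
    H = (L.trace)⁻¹ • (L ⊗ₖ R) :=
  rank_one_rearrangement_recovery_general H σ hσ U V htU htV hH L R hLdef hRdef
end
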